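/- In the Vey basis of the cohomology of the Weil algebra Ŵ_N, every generator u_{i₁}∧⋯∧u_{iᵣ} ⊗ c_{j₁}⋯c_{jₛ} with 1 ≤ i₁ < ⋯ < iᵣ ≤ N, i₁ ≤ j₁ ≤ ⋯ ≤ jₛ, r > 0, j₁+⋯+jₛ ≤ N, and i₁ + j₁ + ⋯ + jₛ > N has total degree (where deg uₖ = 2k−1, deg cₖ = 2k) at least 2N+1 and at most N² + 2N; moreover no such generator has degree exactly 2N+2. -/

import Mathlib

lemma sum_odds (N : ℕ) : ∑ a ∈ Finset.Icc 1 N, (2 * a - 1) = N ^ 2 := by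
  induction N with
  | zero => simp
  | succ n ih =>
    rw [Finset.sum_Icc_succ_top (by omega), ih]
    have h : 2 * (n + 1) - 1 = 2 * n + 1 := by omega
    rw [h]; ring

/-- Degrees of Vey basis generators of `H•(Ŵ_N)`: for data
`i₁ < ⋯ < iᵣ` (`r ≥ 1`), `j₁ ≤ ⋯ ≤ jₛ`, all in `{1,…,N}`, with `i₁ ≤ jₗ`,
`j₁+⋯+jₛ ≤ N` and `i₁ + j₁+⋯+jₛ > N`, the total degree
`∑ₖ (2iₖ − 1) + 2∑ₗ jₗ` satisfies `2N+1 ≤ deg ≤ N²+2N` and `deg ≠ 2N+2`. -/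
theorem vey_basis_degree_bounds (N : ℕ)
    (i₁ : ℕ) (irest : List ℕ) (j : List ℕ)
    (hi1 : 1 ≤ i₁)
    (hichain : List.Chain' (· < ·) (i₁ :: irest))
    (hiN : ∀ a ∈ (i₁ :: irest), a ≤ N)
    (hjsorted : List.Pairwise (· ≤ ·) j)
    (hj1 : ∀ b ∈ j, 1 ≤ b)
    (hjN : ∀ b ∈ j, b ≤ N)
    (hij : ∀ b ∈ j, i₁ ≤ b)
    (hjsum : j.sum ≤ N)
    (hbig : N < i₁ + j.sum) :
    (2 * N + 1 ≤ ((i₁ :: irest).map (fun a => 2 * a - 1)).sum + 2 * j.sum) ∧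
    (((i₁ :: irest).map (fun a => 2 * a - 1)).sum + 2 * j.sum ≤ N ^ 2 + 2 * N) ∧
    (((i₁ :: irest).map (fun a => 2 * a - 1)).sum + 2 * j.sum ≠ 2 * N + 2) := by
  have hpw : List.Pairwise (· < ·) (i₁ :: irest) := List.isChain_iff_pairwise.mp hichain
  have hnodup : (i₁ :: irest).Nodup := hpw.imp ne_of_lt
  have hpos : ∀ a ∈ (i₁ :: irest), 1 ≤ a := by
    intro a ha
    rcases List.mem_cons.mp ha with rfl | h
    · exact hi1
    · have := List.rel_of_pairwise_cons hpw h
      omega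
  have hsub : (i₁ :: irest).toFinset ⊆ Finset.Icc 1 N := by
    intro a ha
    rw [List.mem_toFinset] at ha
    exact Finset.mem_Icc.mpr ⟨hpos a ha, hiN a ha⟩
  have hSeq : ((i₁ :: irest).map (fun a => 2 * a - 1)).sum
      = ∑ a ∈ (i₁ :: irest).toFinset, (2 * a - 1) :=
    (List.sum_toFinset _ hnodup).symm
  have hub : ((i₁ :: irest).map (fun a => 2 * a - 1)).sum ≤ N ^ 2 := by
    rw [hSeq, ← sum_odds N]
    exact Finset.sum_le_sum_of_subset hsub
  refine ⟨?_, by omega, ?_⟩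
  · simp only [List.map_cons, List.sum_cons]
    omega
  · cases irest with
    | nil => simp only [List.map_cons, List.map_nil, List.sum_cons, List.sum_nil]; omega
    | cons i₂ rest =>
      have h12 : i₁ < i₂ := List.rel_of_pairwise_cons hpw List.mem_cons_self
      simp only [List.map_cons, List.sum_cons]
      omega
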